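/- arXiv:1209.5899 — 2 statements merged into one kernel-verified Lean document; each statement's English description precedes it below -/
import Mathlib

section
/- Let n ≥ 2 and 0 < d < n − 1. There exists a constant C = C(n,d) > 0 such that for every radially symmetric integrable function w : ℝⁿ → ℝ and every x ∈ ℝⁿ with x ≠ 0, |x|^d ∫_{ℝⁿ} |x−y|^{−d} |w(y)| dy ≤ C ∫_{ℝⁿ} |w(y)| dy. -/
/-!
Averaging the radial density `g = |w|` over rotations: for `2ρ ≤ |x|`, each point `z` of the
annulus `|x| - ρ ≤ |z| ≤ |x|` has a rotated copy of `B(x, ρ)` inside `B(z, 2ρ)`, and the annulus has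
volume `≳ ρ |x|^(n-1)`, so Fubini gives `∫_{B(x,ρ)} g ≲ (ρ/|x|)^(n-1) ∫ g`. A measure with this
`(n-1)`-dimensional growth at `x` integrates `|x - y|^(-d)` for `d < n - 1` by the layer-cake
formula, with bound `≲ |x|^(-d)` times its total mass.
-/
open MeasureTheory Metric Set Module
open scoped ENNReal

section Potential

variable {X : Type*} [PseudoMetricSpace X]

lemma lt_rpow_neg_inv_of_lt_dist_rpow_neg {x y : X} {d t : ℝ} (hd : 0 < d) (ht : 0 < t)
    (h : t < dist x y ^ (-d)) : dist x y < t ^ (-d⁻¹) := by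
  have hdist : 0 < dist x y := by
    refine dist_nonneg.lt_of_ne fun h0 => ?_
    rw [← h0, Real.zero_rpow (neg_ne_zero.mpr hd.ne')] at h
    exact ht.not_gt h
  calc dist x y = (dist x y ^ (-d)) ^ (-d)⁻¹ := (Real.rpow_rpow_inv hdist.le (by linarith)).symm
    _ < t ^ (-d⁻¹) := by
      rw [inv_neg]
      exact Real.rpow_lt_rpow_of_neg ht h (by simpa using hd)

lemma lintegral_Ioi_rpow_neg {p T : ℝ} (hp : 1 < p) (hT : 0 < T) :
    ∫⁻ t in Ioi T, ENNReal.ofReal (t ^ (-p)) = ENNReal.ofReal (T ^ (1 - p) / (p - 1)) := by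
  rw [← ofReal_integral_eq_lintegral_ofReal (integrableOn_Ioi_rpow_of_lt (by linarith) hT)
    ((ae_restrict_mem measurableSet_Ioi).mono fun t ht => Real.rpow_nonneg (hT.trans ht).le _),
    integral_Ioi_rpow_of_lt (by linarith) hT]
  congr 1
  rw [show -p + 1 = 1 - p by ring, neg_div, ← div_neg, neg_sub]

theorem lintegral_dist_rpow_neg_le [MeasurableSpace X] [OpensMeasurableSpace X] (ν : Measure X)
    (x : X) {d s R : ℝ} {M : ℝ≥0∞} (hd : 0 < d) (hds : d < s) (hR : 0 < R) (htot : ν univ ≤ M)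
    (hball : ∀ ρ, 0 < ρ → ρ < R → ν (ball x ρ) ≤ ENNReal.ofReal ((ρ / R) ^ s) * M) :
    ∫⁻ y, ENNReal.ofReal (dist x y ^ (-d)) ∂ν ≤ ENNReal.ofReal (s / (s - d) * R ^ (-d)) * M := by
  set T := R ^ (-d) with hT_def
  have hT : 0 < T := Real.rpow_pos_of_pos hR _
  have hnear : ∀ t ∈ Ioc 0 T, ν {y | t < dist x y ^ (-d)} ≤ M :=
    fun t _ => (measure_mono (subset_univ _)).trans htot
  have hfar : ∀ t ∈ Ioi T,
      ν {y | t < dist x y ^ (-d)} ≤ ENNReal.ofReal (R ^ (-s) * t ^ (-(s / d))) * M := by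
    intro t (htT : T < t)
    have ht : 0 < t := hT.trans htT
    have hρ : 0 < t ^ (-d⁻¹) := Real.rpow_pos_of_pos ht _
    have hρR : t ^ (-d⁻¹) < R := by
      calc t ^ (-d⁻¹) < T ^ (-d⁻¹) := Real.rpow_lt_rpow_of_neg hT htT (by simpa using hd)
        _ = R := by rw [← Real.rpow_mul hR.le, neg_mul_neg, mul_inv_cancel₀ hd.ne',
          Real.rpow_one]
    calc ν {y | t < dist x y ^ (-d)} ≤ ν (ball x (t ^ (-d⁻¹))) :=
          measure_mono fun y hy => mem_ball'.mpr (lt_rpow_neg_inv_of_lt_dist_rpow_neg hd ht hy)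
      _ ≤ ENNReal.ofReal ((t ^ (-d⁻¹) / R) ^ s) * M := hball _ hρ hρR
      _ = ENNReal.ofReal (R ^ (-s) * t ^ (-(s / d))) * M := by
        rw [Real.div_rpow hρ.le hR.le, ← Real.rpow_mul ht.le, Real.rpow_neg hR.le]
        ring_nf
  have hmeas : AEMeasurable (fun y => dist x y ^ (-d)) ν :=
    ((continuous_const.dist continuous_id).measurable.pow_const _).aemeasurable
  have hsd : 1 < s / d := (one_lt_div hd).mpr hds
  rw [lintegral_eq_lintegral_meas_lt ν (ae_of_all _ fun y => by positivity) hmeas,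
    ← Ioc_union_Ioi_eq_Ioi hT.le, lintegral_union measurableSet_Ioi (Ioc_disjoint_Ioi le_rfl)]
  calc (∫⁻ t in Ioc 0 T, ν {y | t < dist x y ^ (-d)}) +
        ∫⁻ t in Ioi T, ν {y | t < dist x y ^ (-d)}
      ≤ (∫⁻ _ in Ioc 0 T, M) + ∫⁻ t in Ioi T, ENNReal.ofReal (R ^ (-s) * t ^ (-(s / d))) * M :=
        add_le_add (setLIntegral_mono' measurableSet_Ioc hnear)
          (setLIntegral_mono' measurableSet_Ioi hfar)
    _ = ENNReal.ofReal (T + R ^ (-s) * (T ^ (1 - s / d) / (s / d - 1))) * M := by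
        have hmeas' : Measurable fun t : ℝ => ENNReal.ofReal (R ^ (-s) * t ^ (-(s / d))) :=
          (measurable_id.pow_const _).const_mul _ |>.ennreal_ofReal
        simp_rw [ENNReal.ofReal_mul (Real.rpow_nonneg hR.le _)] at hmeas' ⊢
        rw [setLIntegral_const, Real.volume_Ioc, sub_zero, lintegral_mul_const _ hmeas',
          lintegral_const_mul' _ _ ENNReal.ofReal_ne_top, lintegral_Ioi_rpow_neg hsd hT,
          ← ENNReal.ofReal_mul (Real.rpow_nonneg hR.le _),
          ENNReal.ofReal_add hT.le (by have := Real.rpow_nonneg hT.le (1 - s / d); positivity),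
          add_mul, mul_comm M]
    _ = ENNReal.ofReal (s / (s - d) * T) * M := by
        congr 2
        have hpow : R ^ (-s) * T ^ (1 - s / d) = T := by
          rw [hT_def, ← Real.rpow_mul hR.le, ← Real.rpow_add hR]
          congr 1
          field_simp
          ring
        rw [← mul_div_assoc, hpow]
        field_simp [(sub_pos.mpr hds).ne']
        ring

end Potential

section Haar

variable {E : Type*} [NormedAddCommGroup E] [NormedSpace ℝ E] [FiniteDimensional ℝ E]
  [MeasurableSpace E] [BorelSpace E] (μ : Measure E) [μ.IsAddHaarMeasure]

theorem lintegral_setLIntegral_ball {g : E → ℝ≥0∞} (hg : AEMeasurable g μ) (r : ℝ) :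
    ∫⁻ z, ∫⁻ y in ball z r, g y ∂μ ∂μ = μ (ball 0 r) * ∫⁻ y, g y ∂μ := by
  have hS : MeasurableSet {p : E × E | p.2 ∈ ball p.1 r} :=
    (isOpen_lt (continuous_snd.dist continuous_fst) continuous_const).measurableSet
  have hprod : AEMeasurable (Function.uncurry fun z y => (ball z r).indicator g y) (μ.prod μ) :=
    (hg.comp_snd).indicator hS
  classical
  calc ∫⁻ z, ∫⁻ y in ball z r, g y ∂μ ∂μ
      = ∫⁻ z, ∫⁻ y, (ball z r).indicator g y ∂μ ∂μ := by
        simp_rw [lintegral_indicator measurableSet_ball]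
    _ = ∫⁻ y, ∫⁻ z, (ball y r).indicator (fun _ => g y) z ∂μ ∂μ := by
        rw [lintegral_lintegral_swap hprod]
        refine lintegral_congr fun y => lintegral_congr fun z => ?_
        rw [indicator_apply, indicator_apply, mem_ball_comm]
    _ = ∫⁻ y, μ (ball 0 r) * g y ∂μ := by
        simp_rw [lintegral_indicator_const measurableSet_ball, Measure.addHaar_ball_center,
          mul_comm]
    _ = μ (ball 0 r) * ∫⁻ y, g y ∂μ := lintegral_const_mul'' _ hg

lemma sub_mul_pow_le_pow_sub_pow {a b : ℝ} (hb : 0 ≤ b) (hba : b ≤ a) (m : ℕ) :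
    (a - b) * a ^ m ≤ a ^ (m + 1) - b ^ (m + 1) := by
  have := pow_le_pow_left₀ hb hba m
  rw [pow_succ', pow_succ']
  nlinarith

theorem le_addHaar_closedBall_diff_ball [Nontrivial E] {a ρ : ℝ} (hρ : 0 ≤ ρ) (hρa : ρ ≤ a) :
    ENNReal.ofReal (ρ * a ^ (finrank ℝ E - 1)) * μ (ball 0 1) ≤
      μ (closedBall 0 a \ ball 0 (a - ρ)) := by
  obtain ⟨m, hm⟩ : ∃ m, finrank ℝ E = m + 1 := ⟨_, (Nat.succ_pred_eq_of_pos finrank_pos).symm⟩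
  rw [measure_sdiff (ball_subset_closedBall.trans (closedBall_subset_closedBall (by linarith)))
      measurableSet_ball.nullMeasurableSet measure_ball_lt_top.ne,
    Measure.addHaar_closedBall _ _ (hρ.trans hρa),
    Measure.addHaar_ball μ 0 (r := a - ρ) (by linarith), hm,
    ← ENNReal.sub_mul (fun _ _ => measure_ball_lt_top.ne),
    ← ENNReal.ofReal_sub _ (pow_nonneg (by linarith) _), Nat.add_sub_cancel]
  gcongr
  simpa only [sub_sub_cancel] using
    sub_mul_pow_le_pow_sub_pow (sub_nonneg.mpr hρa) (sub_le_self a hρ) m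

end Haar

section Radial

variable {E : Type*} [NormedAddCommGroup E] [InnerProductSpace ℝ E] [FiniteDimensional ℝ E]
  [MeasurableSpace E] [BorelSpace E] {g : E → ℝ≥0∞}

lemma setLIntegral_ball_eq_of_norm_eq (hg : ∀ x y : E, ‖x‖ = ‖y‖ → g x = g y) {x z : E}
    (hxz : ‖x‖ = ‖z‖) (ρ : ℝ) : ∫⁻ y in ball x ρ, g y = ∫⁻ y in ball z ρ, g y := by
  set R := (ℝ ∙ (x - z))ᗮ.reflection
  have hRx : R x = z := Submodule.reflection_sub hxz
  have hpre : R ⁻¹' ball z ρ = ball x ρ := by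
    ext y
    rw [mem_preimage, mem_ball, mem_ball, ← hRx, R.dist_map]
  rw [← R.measurePreserving.setLIntegral_comp_preimage_emb
    R.toHomeomorph.measurableEmbedding g (ball z ρ), hpre]
  exact setLIntegral_congr_fun measurableSet_ball fun y _ => hg _ _ (R.norm_map y).symm

lemma setLIntegral_ball_le_of_mem_annulus (hg : ∀ x y : E, ‖x‖ = ‖y‖ → g x = g y) {x z : E}
    {ρ : ℝ} (hρx : ρ < ‖x‖) (hz : z ∈ closedBall 0 ‖x‖ \ ball 0 (‖x‖ - ρ)) :
    ∫⁻ y in ball x ρ, g y ≤ ∫⁻ y in ball z (2 * ρ), g y := by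
  obtain ⟨hzx, hzρ⟩ := hz
  rw [mem_closedBall_zero_iff] at hzx
  rw [mem_ball_zero_iff, not_lt] at hzρ
  have hz0 : 0 < ‖z‖ := by linarith
  set z' := (‖x‖ / ‖z‖) • z
  have hxz' : ‖x‖ = ‖z'‖ := by
    rw [norm_smul, Real.norm_of_nonneg (by positivity), div_mul_cancel₀ _ hz0.ne']
  have hz'z : dist z' z ≤ ρ := by
    rw [dist_eq_norm, show z' - z = (‖x‖ / ‖z‖ - 1) • z by rw [sub_smul, one_smul], norm_smul,
      Real.norm_of_nonneg (sub_nonneg.mpr ((one_le_div hz0).mpr hzx)), sub_mul,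
      div_mul_cancel₀ _ hz0.ne', one_mul]
    linarith
  calc ∫⁻ y in ball x ρ, g y = ∫⁻ y in ball z' ρ, g y := setLIntegral_ball_eq_of_norm_eq hg hxz' ρ
    _ ≤ ∫⁻ y in ball z (2 * ρ), g y := lintegral_mono_set (ball_subset_ball' (by linarith))

theorem setLIntegral_ball_le_of_radial (hg : ∀ x y : E, ‖x‖ = ‖y‖ → g x = g y)
    (hgm : AEMeasurable g) {x : E} {ρ : ℝ} (hρ : 0 < ρ) (hρx : 2 * ρ ≤ ‖x‖) :
    ∫⁻ y in ball x ρ, g y ≤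
      ENNReal.ofReal (2 * (2 * ρ / ‖x‖) ^ (finrank ℝ E - 1)) * ∫⁻ y, g y := by
  have hx : 0 < ‖x‖ := by linarith
  have : Nontrivial E := ⟨⟨x, 0, norm_pos_iff.mp hx⟩⟩
  set A := closedBall (0 : E) ‖x‖ \ ball 0 (‖x‖ - ρ)
  have hmass : volume A * ∫⁻ y in ball x ρ, g y ≤ volume (ball (0 : E) (2 * ρ)) * ∫⁻ y, g y :=
    calc volume A * ∫⁻ y in ball x ρ, g y = ∫⁻ _ in A, ∫⁻ y in ball x ρ, g y := by
          rw [setLIntegral_const, mul_comm]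
      _ ≤ ∫⁻ z in A, ∫⁻ y in ball z (2 * ρ), g y :=
          setLIntegral_mono' (measurableSet_closedBall.diff measurableSet_ball) fun z hz =>
            setLIntegral_ball_le_of_mem_annulus hg (by linarith) hz
      _ ≤ ∫⁻ z, ∫⁻ y in ball z (2 * ρ), g y := setLIntegral_le_lintegral _ _
      _ = volume (ball (0 : E) (2 * ρ)) * ∫⁻ y, g y := lintegral_setLIntegral_ball volume hgm _
  obtain ⟨m, hm⟩ : ∃ m, finrank ℝ E = m + 1 := ⟨_, (Nat.succ_pred_eq_of_pos finrank_pos).symm⟩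
  set c := ENNReal.ofReal (ρ * ‖x‖ ^ m) * volume (ball (0 : E) 1)
  have hc0 : c ≠ 0 := mul_ne_zero (ENNReal.ofReal_pos.mpr (by positivity)).ne'
    (measure_ball_pos _ _ one_pos).ne'
  have hctop : c ≠ ⊤ := ENNReal.mul_ne_top ENNReal.ofReal_ne_top measure_ball_lt_top.ne
  have hvol : volume (ball (0 : E) (2 * ρ)) = c * ENNReal.ofReal (2 * (2 * ρ / ‖x‖) ^ m) := by
    rw [Measure.addHaar_ball _ _ (by positivity), hm, mul_right_comm,
      ← ENNReal.ofReal_mul (by positivity)]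
    congr 2
    rw [div_pow]
    field_simp
    ring
  rw [hm, Nat.add_sub_cancel, ← ENNReal.mul_le_mul_iff_right hc0 hctop, ← mul_assoc, ← hvol]
  calc c * ∫⁻ y in ball x ρ, g y ≤ volume A * ∫⁻ y in ball x ρ, g y := by
        have hA := le_addHaar_closedBall_diff_ball (volume : Measure E) hρ.le (by linarith)
        rw [hm, Nat.add_sub_cancel] at hA
        gcongr
    _ ≤ _ := hmass

theorem lintegral_dist_rpow_neg_mul_le_of_radial (hg : ∀ x y : E, ‖x‖ = ‖y‖ → g x = g y)
    (hgm : AEMeasurable g) {d : ℝ} (hd : 0 < d) (hdE : d < (finrank ℝ E : ℝ) - 1) {x : E}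
    (hx : x ≠ 0) :
    ∫⁻ y, ENNReal.ofReal (dist x y ^ (-d)) * g y ≤
      ENNReal.ofReal (2 ^ (d + 1) * (((finrank ℝ E : ℝ) - 1) / ((finrank ℝ E : ℝ) - 1 - d)) *
        ‖x‖ ^ (-d)) * ∫⁻ y, g y := by
  set s : ℝ := (finrank ℝ E : ℝ) - 1
  have hx' : 0 < ‖x‖ := norm_pos_iff.mpr hx
  have hs : 0 < s := hd.trans hdE
  have hsd : 0 < s - d := sub_pos.mpr hdE
  have : Nontrivial E := ⟨⟨x, 0, hx⟩⟩
  set ν := volume.withDensity g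
  have htot : ν univ ≤ 2 * ∫⁻ y, g y := by
    rw [withDensity_apply _ MeasurableSet.univ, Measure.restrict_univ]
    exact le_mul_of_one_le_left' one_le_two
  have hball : ∀ ρ, 0 < ρ → ρ < ‖x‖ / 2 →
      ν (ball x ρ) ≤ ENNReal.ofReal ((ρ / (‖x‖ / 2)) ^ s) * (2 * ∫⁻ y, g y) := by
    intro ρ hρ hρx
    rw [withDensity_apply _ measurableSet_ball, ← mul_assoc, ← ENNReal.ofReal_ofNat 2,
      ← ENNReal.ofReal_mul (by positivity), mul_comm _ (2 : ℝ), div_div_eq_mul_div, mul_comm ρ,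
      show s = ((finrank ℝ E - 1 : ℕ) : ℝ) by rw [Nat.cast_sub finrank_pos, Nat.cast_one],
      Real.rpow_natCast]
    exact setLIntegral_ball_le_of_radial hg hgm hρ (by linarith)
  calc ∫⁻ y, ENNReal.ofReal (dist x y ^ (-d)) * g y
      = ∫⁻ y, ENNReal.ofReal (dist x y ^ (-d)) ∂ν := by
        have hk : Measurable fun y => ENNReal.ofReal (dist x y ^ (-d)) := by fun_prop
        rw [lintegral_withDensity_eq_lintegral_mul₀ hgm hk.aemeasurable]
        simp_rw [Pi.mul_apply, mul_comm]
    _ ≤ ENNReal.ofReal (s / (s - d) * (‖x‖ / 2) ^ (-d)) * (2 * ∫⁻ y, g y) :=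
        lintegral_dist_rpow_neg_le ν x hd hdE (by positivity) htot hball
    _ = ENNReal.ofReal (2 ^ (d + 1) * (s / (s - d)) * ‖x‖ ^ (-d)) * ∫⁻ y, g y := by
        rw [← mul_assoc, ← ENNReal.ofReal_ofNat 2, ← ENNReal.ofReal_mul (by positivity)]
        congr 2
        rw [Real.div_rpow hx'.le zero_le_two, Real.rpow_neg zero_le_two, Real.rpow_add two_pos,
          Real.rpow_one]
        field_simp

theorem rpow_norm_mul_integral_le_of_radial {w : E → ℝ}
    (hw : ∀ x y : E, ‖x‖ = ‖y‖ → w x = w y) (hint : Integrable w) {d : ℝ} (hd : 0 < d)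
    (hdE : d < (finrank ℝ E : ℝ) - 1) {x : E} (hx : x ≠ 0) :
    ‖x‖ ^ d * ∫ y, ‖x - y‖ ^ (-d) * |w y| ≤
      2 ^ (d + 1) * (((finrank ℝ E : ℝ) - 1) / ((finrank ℝ E : ℝ) - 1 - d)) * ∫ y, |w y| := by
  set C := 2 ^ (d + 1) * (((finrank ℝ E : ℝ) - 1) / ((finrank ℝ E : ℝ) - 1 - d))
  have hC : 0 ≤ C := by
    have := sub_pos.mpr hdE
    have : 0 < (finrank ℝ E : ℝ) - 1 := hd.trans hdE
    positivity
  have hbound := lintegral_dist_rpow_neg_mul_le_of_radial (g := fun y => ENNReal.ofReal |w y|)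
    (fun y z h => by rw [hw y z h]) hint.abs.aemeasurable.ennreal_ofReal hd hdE hx
  have hreal := ENNReal.toReal_mono
    (ENNReal.mul_ne_top ENNReal.ofReal_ne_top hint.abs.lintegral_lt_top.ne) hbound
  rw [ENNReal.toReal_mul, ENNReal.toReal_ofReal (by positivity)] at hreal
  have hmeas : AEStronglyMeasurable (fun y => ‖x - y‖ ^ (-d) * |w y|) :=
    (by fun_prop : Measurable fun y : E => ‖x - y‖ ^ (-d)).aestronglyMeasurable.mul
      hint.abs.aestronglyMeasurable
  have hL : ∫⁻ y, ENNReal.ofReal (‖x - y‖ ^ (-d) * |w y|) =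
      ∫⁻ y, ENNReal.ofReal (dist x y ^ (-d)) * ENNReal.ofReal |w y| :=
    lintegral_congr fun y => by rw [dist_eq_norm, ENNReal.ofReal_mul (by positivity)]
  rw [integral_eq_lintegral_of_nonneg_ae (ae_of_all _ fun y => by positivity) hmeas, hL,
    integral_eq_lintegral_of_nonneg_ae (ae_of_all _ fun y => abs_nonneg _)
      hint.abs.aestronglyMeasurable]
  calc ‖x‖ ^ d * (∫⁻ y, ENNReal.ofReal (dist x y ^ (-d)) * ENNReal.ofReal |w y|).toReal
      ≤ ‖x‖ ^ d * (C * ‖x‖ ^ (-d) * (∫⁻ y, ENNReal.ofReal |w y|).toReal) :=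
        mul_le_mul_of_nonneg_left hreal (by positivity)
    _ = C * (∫⁻ y, ENNReal.ofReal |w y|).toReal := by
      rw [Real.rpow_neg (norm_nonneg _)]
      field_simp [(norm_pos_iff.mpr hx).ne']

end Radial

theorem weighted_radial_convolution_bound_general (n : ℕ) (d : ℝ)
    (hd : 0 < d) (hdn : d < n - 1) :
    ∃ C > 0, ∀ w : EuclideanSpace ℝ (Fin n) → ℝ,
      (∀ x y : EuclideanSpace ℝ (Fin n), ‖x‖ = ‖y‖ → w x = w y) →
      Integrable w →
      ∀ x : EuclideanSpace ℝ (Fin n), x ≠ 0 →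
        ‖x‖ ^ d * (∫ y : EuclideanSpace ℝ (Fin n), ‖x - y‖ ^ (-d) * |w y|) ≤
          C * ∫ y : EuclideanSpace ℝ (Fin n), |w y| := by
  have := sub_pos.mpr hdn
  have : 0 < (n : ℝ) - 1 := hd.trans hdn
  refine ⟨2 ^ (d + 1) * (((n : ℝ) - 1) / ((n : ℝ) - 1 - d)), by positivity,
    fun w hw hint x hx => ?_⟩
  simpa only [finrank_euclideanSpace_fin] using
    rpow_norm_mul_integral_le_of_radial hw hint hd (by rwa [finrank_euclideanSpace_fin]) hx

/-- Let `n ≥ 2` and `0 < d < n − 1`. There is `C = C(n,d) > 0` such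
that for every radially symmetric integrable `w : ℝⁿ → ℝ` and every `x ≠ 0`,
`|x|^d ∫ |x−y|^{−d} |w(y)| dy ≤ C ∫ |w(y)| dy`. -/
theorem weighted_radial_convolution_bound (n : ℕ) (hn : 2 ≤ n) (d : ℝ)
    (hd : 0 < d) (hdn : d < n - 1) :
    ∃ C > 0, ∀ w : EuclideanSpace ℝ (Fin n) → ℝ,
      (∀ x y : EuclideanSpace ℝ (Fin n), ‖x‖ = ‖y‖ → w x = w y) →
      Integrable w →
      ∀ x : EuclideanSpace ℝ (Fin n), x ≠ 0 →
        ‖x‖ ^ d * (∫ y : EuclideanSpace ℝ (Fin n), ‖x - y‖ ^ (-d) * |w y|) ≤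
          C * ∫ y : EuclideanSpace ℝ (Fin n), |w y| :=
  weighted_radial_convolution_bound_general n d hd hdn
end

section
/- Let c > 1, K > 0, E > 0 and T > 0, and assume K·(4E)^c < E (equivalently, E < 4^{−c/(c−1)} K^{−1/(c−1)}). Suppose f : [0,T] → ℝ is continuous, f(t) ≥ 0 for all t ∈ [0,T], f(0) < 4E, and ½ f(t) − K f(t)^c ≤ E for all t ∈ [0,T]. Then f(t) < 4E for all t ∈ [0,T]. -/
/-- Bootstrap (continuity) argument: let `c > 1`, `K, E, T > 0` with
`K (4E)^c < E`. If `f : [0,T] → ℝ` is continuous and nonnegative, `f(0) < 4E`, and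
`½ f(t) − K f(t)^c ≤ E` on `[0,T]`, then `f(t) < 4E` on `[0,T]`. -/
theorem bootstrap_small_data (c K E T : ℝ) (hc : 1 < c) (hK : 0 < K) (hE : 0 < E)
    (hT : 0 < T) (hsmall : K * (4 * E) ^ c < E)
    (f : ℝ → ℝ) (hf : ContinuousOn f (Set.Icc 0 T))
    (hfnn : ∀ t ∈ Set.Icc (0 : ℝ) T, 0 ≤ f t)
    (hf0 : f 0 < 4 * E)
    (hineq : ∀ t ∈ Set.Icc (0 : ℝ) T, f t / 2 - K * f t ^ c ≤ E) :
    ∀ t ∈ Set.Icc (0 : ℝ) T, f t < 4 * E := by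
  intro t ht
  by_contra h
  push_neg at h
  have hsub : Set.Icc (0 : ℝ) t ⊆ Set.Icc 0 T :=
    Set.Icc_subset_Icc le_rfl ht.2
  have hcont : ContinuousOn f (Set.Icc 0 t) := hf.mono hsub
  have hiv := intermediate_value_Icc ht.1 hcont
  obtain ⟨s, hs, hfs⟩ := hiv ⟨hf0.le, h⟩
  have := hineq s (hsub hs)
  rw [hfs] at this
  linarith
end
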